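/- Suppose Ψ: ℝⁿ → ℝ is differentiable, bounded below by Ψ_inf, has L-Lipschitz gradient, and satisfies the Polyak–Łojasiewicz condition 2c(Ψ(θ) - Ψ_inf) ≤ ‖∇Ψ(θ)‖² for some c > 0. If the deterministic iteration θ_{k+1} = θ_k - (B_k + λI)⁻¹∇Ψ(θ_k) is run with B_k symmetric, 0 ⪯ B_k ⪯ hI, and fixed λ ≥ L, then Ψ(θ_k) - Ψ_inf ≤ (1 - c/(h+λ))^k (Ψ(θ₀) - Ψ_inf). -/

import Mathlib

open Matrix

/-! The preconditioner `M = B + λ • 1` satisfies `λ ≤ M ≤ h + λ` in the Loewner order. For the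
step `v = M⁻¹ ∇Ψ(θ)`, the quadratic upper bound of an `L`-smooth function together with `L ≤ λ`
gives `Ψ(θ - v) ≤ Ψ(θ) - ⟪M v, v⟫ / 2`, and `M ≤ h + λ` gives `‖M v‖² ≤ (h + λ) ⟪M v, v⟫`.
So each step decreases `Ψ` by at least `‖∇Ψ(θ)‖² / (2 (h + λ))`, which the PL inequality turns
into a contraction of `Ψ - Ψinf` by the factor `1 - c / (h + λ)`. -/

section Loewner

variable {E : Type*} [NormedAddCommGroup E] [InnerProductSpace ℝ E]

theorem LinearMap.norm_apply_sq_le_mul_inner_of_le_smul_one {T : E →ₗ[ℝ] E} {κ : ℝ}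
    (hT : 0 ≤ T) (hTκ : T ≤ κ • 1) (hκ : 0 < κ) (x : E) :
    ‖T x‖ ^ 2 ≤ κ * inner ℝ (T x) x := by
  rw [nonneg_iff_isPositive] at hT
  rw [le_def] at hTκ
  have hsymm : inner ℝ (T (T x)) x = ‖T x‖ ^ 2 := by
    rw [hT.isSymmetric, real_inner_self_eq_norm_sq]
  have hupper : inner ℝ (T (T x)) (T x) ≤ κ * ‖T x‖ ^ 2 := by
    have := hTκ.inner_nonneg_left (T x)
    rw [sub_apply, smul_apply, Module.End.one_apply, inner_sub_left, real_inner_smul_left,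
      real_inner_self_eq_norm_sq] at this
    linarith
  -- `T` is nonnegative along `κ • x - T x`; the upper bound on `T` absorbs the term `⟪T² x, T x⟫`
  have hnonneg := hT.inner_nonneg_left (κ • x - T x)
  simp only [map_sub, map_smul, inner_sub_left, inner_sub_right, real_inner_smul_left,
    real_inner_smul_right, hsymm, real_inner_self_eq_norm_sq] at hnonneg
  have : 0 ≤ κ * (κ * inner ℝ (T x) x - ‖T x‖ ^ 2) := by linarith
  linarith [(mul_nonneg_iff_of_pos_left hκ).1 this]

theorem LinearMap.smul_norm_sq_le_inner_of_smul_one_le {T : E →ₗ[ℝ] E} {lam : ℝ}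
    (hT : lam • 1 ≤ T) (x : E) : lam * ‖x‖ ^ 2 ≤ inner ℝ (T x) x := by
  have := ((le_def _ _).1 hT).inner_nonneg_left x
  rw [sub_apply, smul_apply, Module.End.one_apply, inner_sub_left, real_inner_smul_left,
    real_inner_self_eq_norm_sq] at this
  linarith

end Loewner

section Matrix

open scoped ComplexOrder

variable {ι 𝕜 : Type*} [Fintype ι] [DecidableEq ι] [RCLike 𝕜]

theorem Matrix.toEuclideanLin_le_toEuclideanLin_iff {A B : Matrix ι ι 𝕜} :
    A.toEuclideanLin ≤ B.toEuclideanLin ↔ (B - A).PosSemidef := by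
  rw [LinearMap.le_def, ← map_sub, isPositive_toEuclideanLin_iff]

theorem Matrix.toEuclideanLin_smul_one (a : 𝕜) :
    (a • 1 : Matrix ι ι 𝕜).toEuclideanLin = a • 1 := by
  ext x i
  simp

theorem Matrix.toEuclideanLin_apply_toEuclideanLin_inv {A : Matrix ι ι 𝕜} (hA : IsUnit A.det)
    (x : EuclideanSpace 𝕜 ι) : A.toEuclideanLin (A⁻¹.toEuclideanLin x) = x := by
  ext i
  simp [mulVec_mulVec, mul_nonsing_inv _ hA]

theorem Matrix.PosSemidef.smul_one_le_toEuclideanLin_add_smul_one {B : Matrix ι ι 𝕜}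
    (hB : B.PosSemidef) (a : 𝕜) : a • 1 ≤ (B + a • 1).toEuclideanLin := by
  rwa [← toEuclideanLin_smul_one, toEuclideanLin_le_toEuclideanLin_iff, add_sub_cancel_right]

theorem Matrix.toEuclideanLin_add_smul_one_le {B : Matrix ι ι 𝕜} {h : 𝕜}
    (hB : (h • 1 - B).PosSemidef) (a : 𝕜) : (B + a • 1).toEuclideanLin ≤ (h + a) • 1 := by
  rwa [← toEuclideanLin_smul_one, toEuclideanLin_le_toEuclideanLin_iff, add_smul,
    add_sub_add_right_eq_sub]

end Matrix

section Smooth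

variable {E : Type*} [NormedAddCommGroup E] [InnerProductSpace ℝ E] [CompleteSpace E]
  {Ψ : E → ℝ} {L : ℝ}

theorem apply_add_le_of_lipschitz_gradient (hΨ : Differentiable ℝ Ψ)
    (hLip : ∀ x y, ‖gradient Ψ x - gradient Ψ y‖ ≤ L * ‖x - y‖) (x v : E) :
    Ψ (x + v) ≤ Ψ x + inner ℝ (gradient Ψ x) v + L / 2 * ‖v‖ ^ 2 := by
  set φ : ℝ → ℝ := fun t ↦
    Ψ (x + t • v) - t * inner ℝ (gradient Ψ x) v - L / 2 * ‖v‖ ^ 2 * t ^ 2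
  have hφ : ∀ t, HasDerivAt φ (inner ℝ (gradient Ψ (x + t • v) - gradient Ψ x) v
      - L * ‖v‖ ^ 2 * t) t := by
    intro t
    have hline : HasDerivAt (fun s : ℝ ↦ x + s • v) v t := by
      simpa using ((hasDerivAt_id t).smul_const v).const_add x
    have hΨline : HasDerivAt (fun s : ℝ ↦ Ψ (x + s • v))
        (inner ℝ (gradient Ψ (x + t • v)) v) t :=
      (hΨ _).hasGradientAt.hasFDerivAt.comp_hasDerivAt t hline
    refine ((hΨline.sub ((hasDerivAt_id t).mul_const _)).sub
      ((hasDerivAt_pow 2 t).const_mul (L / 2 * ‖v‖ ^ 2))).congr_deriv ?_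
    rw [inner_sub_left]
    ring
  have hanti : AntitoneOn φ (Set.Icc 0 1) := by
    refine antitoneOn_of_hasDerivWithinAt_nonpos (convex_Icc 0 1)
      (fun t _ ↦ (hφ t).continuousAt.continuousWithinAt)
      (fun t _ ↦ (hφ t).hasDerivWithinAt) fun t ht ↦ ?_
    rw [interior_Icc] at ht
    have : inner ℝ (gradient Ψ (x + t • v) - gradient Ψ x) v ≤ L * ‖v‖ ^ 2 * t :=
      calc _ ≤ ‖gradient Ψ (x + t • v) - gradient Ψ x‖ * ‖v‖ := real_inner_le_norm _ _
        _ ≤ L * ‖x + t • v - x‖ * ‖v‖ := by gcongr; exact hLip _ _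
        _ = L * ‖v‖ ^ 2 * t := by
          rw [add_sub_cancel_left, norm_smul, Real.norm_of_nonneg ht.1.le]; ring
    linarith
  have := hanti (Set.left_mem_Icc.2 zero_le_one) (Set.right_mem_Icc.2 zero_le_one) zero_le_one
  simp only [φ, zero_smul, add_zero, one_smul, zero_mul, sub_zero, one_pow, mul_one, one_mul,
    zero_pow two_ne_zero, mul_zero] at this
  linarith

theorem apply_sub_le_sub_sq_norm_gradient_div (hΨ : Differentiable ℝ Ψ)
    (hLip : ∀ x y, ‖gradient Ψ x - gradient Ψ y‖ ≤ L * ‖x - y‖) {T : E →ₗ[ℝ] E} {lam κ : ℝ}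
    (hL : L ≤ lam) (hlam : 0 ≤ lam) (hT_low : lam • 1 ≤ T) (hT_up : T ≤ κ • 1) (hκ : 0 < κ)
    {x v : E} (hv : T v = gradient Ψ x) :
    Ψ (x - v) ≤ Ψ x - ‖gradient Ψ x‖ ^ 2 / (2 * κ) := by
  have hT : 0 ≤ T := by
    rw [LinearMap.nonneg_iff_isPositive, ← sub_add_cancel T (lam • 1)]
    exact ((LinearMap.le_def _ _).1 hT_low).add (LinearMap.isPositive_one.smul_of_nonneg hlam)
  have hdescent := apply_add_le_of_lipschitz_gradient hΨ hLip x (-v)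
  rw [← sub_eq_add_neg, inner_neg_right, norm_neg, ← hv] at hdescent
  have hlower := LinearMap.smul_norm_sq_le_inner_of_smul_one_le hT_low v
  have hupper := LinearMap.norm_apply_sq_le_mul_inner_of_le_smul_one hT hT_up hκ v
  have hvv : L * ‖v‖ ^ 2 ≤ lam * ‖v‖ ^ 2 := by gcongr
  have hdecrease : ‖T v‖ ^ 2 / (2 * κ) ≤ inner ℝ (T v) v / 2 := by
    rw [div_le_iff₀ (by positivity)]
    linarith
  rw [← hv]
  linarith

end Smooth

theorem le_pow_mul_of_le_mul {u : ℕ → ℝ} {q : ℝ} (hu : ∀ k, 0 ≤ u k)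
    (h : ∀ k, u (k + 1) ≤ q * u k) (k : ℕ) : u k ≤ q ^ k * u 0 := by
  rcases le_or_gt 0 q with hq | hq
  · exact le_geom hq k fun j _ ↦ h j
  -- a negative factor forces the nonnegative sequence to vanish
  have hu0 : u 0 = 0 := le_antisymm (by nlinarith [hu 1, h 0]) (hu 0)
  rw [hu0, mul_zero]
  cases k with
  | zero => exact hu0.le
  | succ k => exact (h k).trans (mul_nonpos_of_nonpos_of_nonneg hq.le (hu k))

theorem pl_linear_convergence_general (n : ℕ)
    (Ψ : EuclideanSpace ℝ (Fin n) → ℝ) (Ψinf L c h lam : ℝ)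
    (hΨ : Differentiable ℝ Ψ)
    (hbound : ∀ θ, Ψinf ≤ Ψ θ)
    (hLip : ∀ x y, ‖gradient Ψ x - gradient Ψ y‖ ≤ L * ‖x - y‖)
    (hPL : ∀ θ, 2 * c * (Ψ θ - Ψinf) ≤ ‖gradient Ψ θ‖ ^ 2)
    (hh : 0 ≤ h) (hlamL : L ≤ lam) (hlam : 0 < lam)
    (B : ℕ → Matrix (Fin n) (Fin n) ℝ)
    (hB0 : ∀ k, (B k).PosSemidef)
    (hBh : ∀ k, (h • (1 : Matrix (Fin n) (Fin n) ℝ) - B k).PosSemidef)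
    (θ : ℕ → EuclideanSpace ℝ (Fin n))
    (hupd : ∀ k, θ (k + 1) = θ k -
      Matrix.toEuclideanLin (B k + lam • (1 : Matrix (Fin n) (Fin n) ℝ))⁻¹
        (gradient Ψ (θ k))) :
    ∀ k, Ψ (θ k) - Ψinf ≤ (1 - c / (h + lam)) ^ k * (Ψ (θ 0) - Ψinf) := by
  have hκ : 0 < h + lam := by linarith
  have step : ∀ k, Ψ (θ (k + 1)) - Ψinf ≤ (1 - c / (h + lam)) * (Ψ (θ k) - Ψinf) := by
    intro k
    set M := B k + lam • (1 : Matrix (Fin n) (Fin n) ℝ)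
    have hM_det : IsUnit M.det :=
      (isUnit_iff_isUnit_det M).1 (PosDef.posSemidef_add (hB0 k) (PosDef.one.smul hlam)).isUnit
    have hdecrease := apply_sub_le_sub_sq_norm_gradient_div hΨ hLip hlamL hlam.le
      ((hB0 k).smul_one_le_toEuclideanLin_add_smul_one lam)
      (toEuclideanLin_add_smul_one_le (hBh k) lam) hκ
      (toEuclideanLin_apply_toEuclideanLin_inv hM_det (gradient Ψ (θ k)))
    have hPL_step :
        c / (h + lam) * (Ψ (θ k) - Ψinf) ≤ ‖gradient Ψ (θ k)‖ ^ 2 / (2 * (h + lam)) :=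
      calc _ = 2 * c * (Ψ (θ k) - Ψinf) / (2 * (h + lam)) := by field_simp
        _ ≤ _ := by gcongr; exact hPL (θ k)
    rw [hupd k]
    linarith
  exact le_pow_mul_of_le_mul (fun k ↦ sub_nonneg.2 (hbound _)) step

theorem pl_linear_convergence (n : ℕ)
    (Ψ : EuclideanSpace ℝ (Fin n) → ℝ) (Ψinf L c h lam : ℝ)
    (hΨ : Differentiable ℝ Ψ)
    (hbound : ∀ θ, Ψinf ≤ Ψ θ)
    (hLip : ∀ x y, ‖gradient Ψ x - gradient Ψ y‖ ≤ L * ‖x - y‖)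
    (hc : 0 < c)
    (hPL : ∀ θ, 2 * c * (Ψ θ - Ψinf) ≤ ‖gradient Ψ θ‖ ^ 2)
    (hh : 0 ≤ h) (hlamL : L ≤ lam) (hlam : 0 < lam)
    (B : ℕ → Matrix (Fin n) (Fin n) ℝ)
    (hBsym : ∀ k, (B k).IsSymm)
    (hB0 : ∀ k, (B k).PosSemidef)
    (hBh : ∀ k, (h • (1 : Matrix (Fin n) (Fin n) ℝ) - B k).PosSemidef)
    (θ : ℕ → EuclideanSpace ℝ (Fin n))
    (hupd : ∀ k, θ (k + 1) = θ k -
      Matrix.toEuclideanLin (B k + lam • (1 : Matrix (Fin n) (Fin n) ℝ))⁻¹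
        (gradient Ψ (θ k))) :
    ∀ k, Ψ (θ k) - Ψinf ≤ (1 - c / (h + lam)) ^ k * (Ψ (θ 0) - Ψinf) :=
  pl_linear_convergence_general n Ψ Ψinf L c h lam hΨ hbound hLip hPL hh hlamL hlam B hB0 hBh θ hupd
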